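/- Monotonicity of marginal costs along used directions (Proposition 4): In the service-chain model, let (φ,t) be feasible for r with a marginal vector λ satisfying the sufficient-optimality condition. Then for every stage (a,k) and every i ∈ V: (i) if k < K_a and φ_{i0}(a,k) > 0 then λ_i(a,k) ≥ λ_i(a,k+1); (ii) for every j ∈ V with φ_{ij}(a,k) > 0, λ_i(a,k) ≥ λ_j(a,k). If moreover every D_{ij} and every C_i is strictly increasing and t_i(a,k) > 0, then the inequalities in (i) and (ii) hold strictly. -/

import Mathlib

open scoped BigOperators
open Classical

/-- The service-chain network model: a finite directed graph, a finite set of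
applications, each with a chain length, a destination, packet sizes and computation
weights, together with nondecreasing convex continuously differentiable link and
computation cost functions (with their derivatives). -/
structure SCNet (V A : Type) [Fintype V] [DecidableEq V] [Fintype A] where
  /-- the edge relation -/
  E : V → V → Prop
  /-- chain length of each application -/
  K : A → ℕ
  /-- destination of each application -/
  dest : A → V
  /-- packet size of each stage -/
  L : A → ℕ → ℝ
  hL : ∀ a k, k ≤ K a → 0 < L a k
  /-- computation weights -/
  w : V → A → ℕ → ℝ
  hw : ∀ i a k, k ≤ K a → 0 < w i a k
  /-- link cost functions -/
  D : V → V → ℝ → ℝ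
  /-- derivative of the link cost functions -/
  D' : V → V → ℝ → ℝ
  /-- computation cost functions -/
  C : V → ℝ → ℝ
  /-- derivative of the computation cost functions -/
  C' : V → ℝ → ℝ
  hD_mono : ∀ i j, E i j → MonotoneOn (D i j) (Set.Ici 0)
  hD_conv : ∀ i j, E i j → ConvexOn ℝ (Set.Ici 0) (D i j)
  hD_deriv : ∀ i j, E i j → ∀ x ∈ Set.Ici (0 : ℝ),
    HasDerivWithinAt (D i j) (D' i j x) (Set.Ici 0) x
  hD'_cont : ∀ i j, E i j → ContinuousOn (D' i j) (Set.Ici 0)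
  hC_mono : ∀ i, MonotoneOn (C i) (Set.Ici 0)
  hC_conv : ∀ i, ConvexOn ℝ (Set.Ici 0) (C i)
  hC_deriv : ∀ i, ∀ x ∈ Set.Ici (0 : ℝ),
    HasDerivWithinAt (C i) (C' i x) (Set.Ici 0) x
  hC'_cont : ∀ i, ContinuousOn (C' i) (Set.Ici 0)

variable {V A : Type} [Fintype V] [DecidableEq V] [Fintype A]

/-- A forwarding strategy: `φ i (some j) a k` is the fraction of stage-(a,k) traffic
that node `i` forwards to node `j`; `φ i none a k` is the fraction forwarded to `i`'s CPU. -/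
structure IsStrategy (N : SCNet V A) (φ : V → Option V → A → ℕ → ℝ) : Prop where
  nonneg : ∀ i j a k, 0 ≤ φ i j a k
  le_one : ∀ i j a k, φ i j a k ≤ 1
  no_edge : ∀ i j a k, ¬ N.E i j → φ i (some j) a k = 0
  cpu_last : ∀ i a, φ i none a (N.K a) = 0
  sum_one : ∀ i a k, k ≤ N.K a → ¬(i = N.dest a ∧ k = N.K a) →
    φ i none a k + ∑ j, φ i (some j) a k = 1
  sum_dest : ∀ a,
    φ (N.dest a) none a (N.K a) + ∑ j, φ (N.dest a) (some j) a (N.K a) = 0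

/-- A traffic vector for input rates `r` and strategy `φ`. -/
structure IsTraffic (N : SCNet V A) (r : V → A → ℝ) (φ : V → Option V → A → ℕ → ℝ)
    (t : V → A → ℕ → ℝ) : Prop where
  nonneg : ∀ i a k, 0 ≤ t i a k
  base : ∀ i a, t i a 0 = r i a + ∑ j, t j a 0 * φ j (some i) a 0
  step : ∀ i a k, 1 ≤ k → k ≤ N.K a →
    t i a k = (∑ j, t j a k * φ j (some i) a k) + t i a (k - 1) * φ i none a (k - 1)

/-- A pair (strategy, traffic) feasible for the input rates `r`. -/
def Feasible (N : SCNet V A) (r : V → A → ℝ) (φ : V → Option V → A → ℕ → ℝ)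
    (t : V → A → ℕ → ℝ) : Prop :=
  IsStrategy N φ ∧ IsTraffic N r φ t

/-- Total flow (bit/sec) on link `(i,j)`. -/
noncomputable def linkFlow (N : SCNet V A) (φ : V → Option V → A → ℕ → ℝ)
    (t : V → A → ℕ → ℝ) (i j : V) : ℝ :=
  ∑ a, ∑ k ∈ Finset.range (N.K a + 1), N.L a k * (t i a k * φ i (some j) a k)

/-- Total computation workload at node `i`. -/
noncomputable def workload (N : SCNet V A) (φ : V → Option V → A → ℕ → ℝ)
    (t : V → A → ℕ → ℝ) (i : V) : ℝ :=
  ∑ a, ∑ k ∈ Finset.range (N.K a + 1), N.w i a k * (t i a k * φ i none a k)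

/-- The aggregated communication and computation cost `T(φ,t)`. -/
noncomputable def totalCost (N : SCNet V A) (φ : V → Option V → A → ℕ → ℝ)
    (t : V → A → ℕ → ℝ) : ℝ :=
  (∑ i, ∑ j, if N.E i j then N.D i j (linkFlow N φ t i j) else 0)
    + ∑ i, N.C i (workload N φ t i)

/-- A marginal-cost vector `λ` for the pair `(φ,t)`, i.e. a solution of the
recursion defining `∂T/∂t_i(a,k)`. -/
structure IsMarginal (N : SCNet V A) (φ : V → Option V → A → ℕ → ℝ)
    (t : V → A → ℕ → ℝ) (lam : V → A → ℕ → ℝ) : Prop where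
  last : ∀ i a, lam i a (N.K a) =
    ∑ j, φ i (some j) a (N.K a) *
      (N.L a (N.K a) * N.D' i j (linkFlow N φ t i j) + lam j a (N.K a))
  step : ∀ i a k, k < N.K a →
    lam i a k =
      (∑ j, φ i (some j) a k * (N.L a k * N.D' i j (linkFlow N φ t i j) + lam j a k))
        + φ i none a k * (N.w i a k * N.C' i (workload N φ t i) + lam i a (k + 1))

/-- `j` is an admissible forwarding direction at node `i` and stage `(a,k)`:
either a physical out-neighbor, or the CPU provided `k < K a`. -/
def Admissible (N : SCNet V A) (i : V) (a : A) (k : ℕ) : Option V → Prop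
  | some j => N.E i j
  | none => k < N.K a

/-- The modified marginals `δ_{ij}(a,k)`. -/
noncomputable def mdelta (N : SCNet V A) (φ : V → Option V → A → ℕ → ℝ)
    (t : V → A → ℕ → ℝ) (lam : V → A → ℕ → ℝ) (i : V) (a : A) (k : ℕ) :
    Option V → ℝ
  | some j => N.L a k * N.D' i j (linkFlow N φ t i j) + lam j a k
  | none => N.w i a k * N.C' i (workload N φ t i) + lam i a (k + 1)

/-- The sufficient-optimality condition: every direction used at node `i` for stage
`(a,k)` achieves the minimum modified marginal over all admissible directions. -/
def SuffCond (N : SCNet V A) (φ : V → Option V → A → ℕ → ℝ)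
    (t : V → A → ℕ → ℝ) (lam : V → A → ℕ → ℝ) : Prop :=
  ∀ i a k, k ≤ N.K a → ∀ j, Admissible N i a k j → 0 < φ i j a k →
    ∀ j', Admissible N i a k j' →
      mdelta N φ t lam i a k j ≤ mdelta N φ t lam i a k j'

/-! By the recursion defining `λ`, the marginal `λ_i(a,k)` is the `φ`-weighted average of the
modified marginals `δ_{ij}(a,k)` over all directions `j`, with weights summing to one. Every
used direction attains the minimum of `δ`, so each used `δ_{ij}(a,k)` is at most `λ_i(a,k)`.
On the other hand `δ_{ij}(a,k)` exceeds the next marginal (`λ_j(a,k)` or `λ_i(a,k+1)`) by a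
positive packet size or weight times the derivative of a nondecreasing cost, which is
nonnegative. If the cost is moreover strictly increasing and convex, the derivative is positive
at every positive argument, and the flow or workload is positive as soon as it contains the
positive term `t_i(a,k) φ_{ij}(a,k)`. -/

open Set

lemma HasDerivWithinAt.pos_of_strictMonoOn_of_convexOn {f : ℝ → ℝ} {f' x y : ℝ} {S : Set ℝ}
    (hd : HasDerivWithinAt f f' S y) (hf : StrictMonoOn f S) (hfc : ConvexOn ℝ S f)
    (hx : x ∈ S) (hy : y ∈ S) (hxy : x < y) : 0 < f' :=
  calc 0 < slope f x y := by
        rw [slope_def_field]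
        exact div_pos (sub_pos.2 (hf hx hy hxy)) (sub_pos.2 hxy)
    _ ≤ f' := hfc.slope_le_of_hasDerivWithinAt hx hy hxy hd

lemma le_sum_mul_of_forall_pos_le {ι : Type*} [Fintype ι] {p x : ι → ℝ} {m : ℝ}
    (hp : ∀ j, 0 ≤ p j) (hsum : ∑ j, p j = 1) (hm : ∀ j, 0 < p j → m ≤ x j) :
    m ≤ ∑ j, p j * x j :=
  calc m = ∑ j, p j * m := by rw [← Finset.sum_mul, hsum, one_mul]
    _ ≤ ∑ j, p j * x j := by
      refine Finset.sum_le_sum fun j _ => ?_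
      rcases (hp j).eq_or_lt with hzero | hpos
      · simp [← hzero]
      · exact mul_le_mul_of_nonneg_left (hm j hpos) hpos.le

lemma single_le_sum_stages {A : Type*} [Fintype A] {K : A → ℕ} {f : A → ℕ → ℝ}
    (hf : ∀ a k, k ≤ K a → 0 ≤ f a k) {a : A} {k : ℕ} (hk : k ≤ K a) :
    f a k ≤ ∑ a, ∑ k ∈ Finset.range (K a + 1), f a k := by
  have hf' : ∀ a, ∀ k ∈ Finset.range (K a + 1), 0 ≤ f a k := fun a k hk =>
    hf a k (Nat.lt_succ_iff.mp (Finset.mem_range.mp hk))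
  calc f a k ≤ ∑ k ∈ Finset.range (K a + 1), f a k :=
        Finset.single_le_sum (hf' a) (Finset.mem_range.mpr (Nat.lt_succ_of_le hk))
    _ ≤ ∑ a, ∑ k ∈ Finset.range (K a + 1), f a k :=
        Finset.single_le_sum (fun a _ => Finset.sum_nonneg (hf' a)) (Finset.mem_univ a)

lemma sum_stages_nonneg {A : Type*} [Fintype A] {K : A → ℕ} {f : A → ℕ → ℝ}
    (hf : ∀ a k, k ≤ K a → 0 ≤ f a k) : 0 ≤ ∑ a, ∑ k ∈ Finset.range (K a + 1), f a k :=
  Finset.sum_nonneg fun a _ => Finset.sum_nonneg fun k hk =>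
    hf a k (Nat.lt_succ_iff.mp (Finset.mem_range.mp hk))

namespace SCNet

variable (N : SCNet V A)

lemma D'_nonneg {i j : V} (hE : N.E i j) {x : ℝ} (hx : 0 ≤ x) : 0 ≤ N.D' i j x :=
  (N.hD_deriv i j hE x hx).nonneg_of_monotoneOn (uniqueDiffOn_Ici 0 x hx).accPt
    (N.hD_mono i j hE)

lemma C'_nonneg (i : V) {x : ℝ} (hx : 0 ≤ x) : 0 ≤ N.C' i x :=
  (N.hC_deriv i x hx).nonneg_of_monotoneOn (uniqueDiffOn_Ici 0 x hx).accPt (N.hC_mono i)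

lemma D'_pos {i j : V} (hE : N.E i j) (hD : StrictMonoOn (N.D i j) (Ici 0)) {x : ℝ}
    (hx : 0 < x) : 0 < N.D' i j x :=
  (N.hD_deriv i j hE x hx.le).pos_of_strictMonoOn_of_convexOn hD (N.hD_conv i j hE)
    self_mem_Ici hx.le hx

lemma C'_pos {i : V} (hC : StrictMonoOn (N.C i) (Ici 0)) {x : ℝ} (hx : 0 < x) :
    0 < N.C' i x :=
  (N.hC_deriv i x hx.le).pos_of_strictMonoOn_of_convexOn hC (N.hC_conv i) self_mem_Ici hx.le hx

end SCNet

namespace IsStrategy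

variable {N : SCNet V A} {φ : V → Option V → A → ℕ → ℝ}

lemma edge_of_pos (hφ : IsStrategy N φ) {i j : V} {a : A} {k : ℕ} (hpos : 0 < φ i (some j) a k) : N.E i j := by
  by_contra hE
  exact hpos.ne' (hφ.no_edge i j a k hE)

lemma lt_K_of_cpu_pos (hφ : IsStrategy N φ) {i : V} {a : A} {k : ℕ} (hk : k ≤ N.K a) (hpos : 0 < φ i none a k) :
    k < N.K a := by
  refine hk.lt_of_ne ?_
  rintro rfl
  exact hpos.ne' (hφ.cpu_last i a)

lemma admissible_of_pos (hφ : IsStrategy N φ) {i : V} {a : A} {k : ℕ} (hk : k ≤ N.K a) {j : Option V}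
    (hpos : 0 < φ i j a k) : Admissible N i a k j :=
  match j with
  | some _ => hφ.edge_of_pos hpos
  | none => hφ.lt_K_of_cpu_pos hk hpos

lemma sum_eq_one_of_pos (hφ : IsStrategy N φ) {i : V} {a : A} {k : ℕ} (hk : k ≤ N.K a) {j : Option V}
    (hpos : 0 < φ i j a k) : ∑ j', φ i j' a k = 1 := by
  rw [Fintype.sum_option]
  refine hφ.sum_one i a k hk ?_
  rintro ⟨rfl, rfl⟩
  -- at the destination of the last stage all fractions vanish, so none is positive
  have hzero := (Finset.sum_eq_zero_iff_of_nonneg fun j' _ => hφ.nonneg _ j' a _).mp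
    (by rw [Fintype.sum_option]; exact hφ.sum_dest a) j (Finset.mem_univ j)
  exact hpos.ne' hzero

end IsStrategy

section Marginal

variable {N : SCNet V A} {φ : V → Option V → A → ℕ → ℝ} {t lam : V → A → ℕ → ℝ}

lemma linkFlow_summand_nonneg (hφ : IsStrategy N φ) (ht : ∀ i a k, 0 ≤ t i a k) (i j : V) :
    ∀ a k, k ≤ N.K a → 0 ≤ N.L a k * (t i a k * φ i (some j) a k) := fun a k hk =>
  mul_nonneg (N.hL a k hk).le (mul_nonneg (ht i a k) (hφ.nonneg i (some j) a k))

lemma workload_summand_nonneg (hφ : IsStrategy N φ) (ht : ∀ i a k, 0 ≤ t i a k) (i : V) :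
    ∀ a k, k ≤ N.K a → 0 ≤ N.w i a k * (t i a k * φ i none a k) := fun a k hk =>
  mul_nonneg (N.hw i a k hk).le (mul_nonneg (ht i a k) (hφ.nonneg i none a k))

lemma linkFlow_nonneg (hφ : IsStrategy N φ) (ht : ∀ i a k, 0 ≤ t i a k) (i j : V) :
    0 ≤ linkFlow N φ t i j :=
  sum_stages_nonneg (linkFlow_summand_nonneg hφ ht i j)

lemma workload_nonneg (hφ : IsStrategy N φ) (ht : ∀ i a k, 0 ≤ t i a k) (i : V) :
    0 ≤ workload N φ t i :=
  sum_stages_nonneg (workload_summand_nonneg hφ ht i)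

lemma linkFlow_pos (hφ : IsStrategy N φ) (ht : ∀ i a k, 0 ≤ t i a k) {i j : V} {a : A}
    {k : ℕ} (hk : k ≤ N.K a) (hti : 0 < t i a k) (hpos : 0 < φ i (some j) a k) :
    0 < linkFlow N φ t i j :=
  (mul_pos (N.hL a k hk) (mul_pos hti hpos)).trans_le
    (single_le_sum_stages (linkFlow_summand_nonneg hφ ht i j) hk)

lemma workload_pos (hφ : IsStrategy N φ) (ht : ∀ i a k, 0 ≤ t i a k) {i : V} {a : A}
    {k : ℕ} (hk : k ≤ N.K a) (hti : 0 < t i a k) (hpos : 0 < φ i none a k) :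
    0 < workload N φ t i :=
  (mul_pos (N.hw i a k hk) (mul_pos hti hpos)).trans_le
    (single_le_sum_stages (workload_summand_nonneg hφ ht i) hk)

lemma IsMarginal.eq_sum_mul_mdelta (hlam : IsMarginal N φ t lam) (hφ : IsStrategy N φ)
    {i : V} {a : A} {k : ℕ} (hk : k ≤ N.K a) :
    lam i a k = ∑ j, φ i j a k * mdelta N φ t lam i a k j := by
  rw [Fintype.sum_option]
  rcases hk.lt_or_eq with hlt | rfl
  · rw [hlam.step i a k hlt, add_comm]
    rfl
  · rw [hlam.last i a, hφ.cpu_last i a, zero_mul, zero_add]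
    rfl

lemma SuffCond.mdelta_le (hsuff : SuffCond N φ t lam) (hφ : IsStrategy N φ)
    (hlam : IsMarginal N φ t lam) {i : V} {a : A} {k : ℕ} (hk : k ≤ N.K a) {j : Option V}
    (hpos : 0 < φ i j a k) : mdelta N φ t lam i a k j ≤ lam i a k := by
  rw [hlam.eq_sum_mul_mdelta hφ hk]
  exact le_sum_mul_of_forall_pos_le (fun j' => hφ.nonneg i j' a k) (hφ.sum_eq_one_of_pos hk hpos)
    fun j' hpos' => hsuff i a k hk j (hφ.admissible_of_pos hk hpos) hpos j'
      (hφ.admissible_of_pos hk hpos')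

lemma SuffCond.cpu_marginal_le (hsuff : SuffCond N φ t lam) (hφ : IsStrategy N φ)
    (hlam : IsMarginal N φ t lam) {i : V} {a : A} {k : ℕ} (hk : k ≤ N.K a)
    (hpos : 0 < φ i none a k) :
    N.w i a k * N.C' i (workload N φ t i) + lam i a (k + 1) ≤ lam i a k :=
  hsuff.mdelta_le hφ hlam hk hpos

lemma SuffCond.link_marginal_le (hsuff : SuffCond N φ t lam) (hφ : IsStrategy N φ)
    (hlam : IsMarginal N φ t lam) {i j : V} {a : A} {k : ℕ} (hk : k ≤ N.K a)
    (hpos : 0 < φ i (some j) a k) :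
    N.L a k * N.D' i j (linkFlow N φ t i j) + lam j a k ≤ lam i a k :=
  hsuff.mdelta_le hφ hlam hk hpos

end Marginal

theorem marginal_monotone_along_used_directions_general
    (N : SCNet V A) (r : V → A → ℝ)
    (φ : V → Option V → A → ℕ → ℝ) (t : V → A → ℕ → ℝ) (lam : V → A → ℕ → ℝ)
    (hfeas : Feasible N r φ t) (hlam : IsMarginal N φ t lam)
    (hsuff : SuffCond N φ t lam) :
    (∀ a k, k ≤ N.K a → ∀ i,
      (k < N.K a → 0 < φ i none a k → lam i a (k + 1) ≤ lam i a k)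
      ∧ (∀ j, 0 < φ i (some j) a k → lam j a k ≤ lam i a k))
    ∧ ((∀ i j, N.E i j → StrictMonoOn (N.D i j) (Set.Ici 0)) →
       (∀ i, StrictMonoOn (N.C i) (Set.Ici 0)) →
       ∀ a k, k ≤ N.K a → ∀ i, 0 < t i a k →
        (k < N.K a → 0 < φ i none a k → lam i a (k + 1) < lam i a k)
        ∧ (∀ j, 0 < φ i (some j) a k → lam j a k < lam i a k)) := by
  obtain ⟨hφ, ht⟩ := hfeas
  refine ⟨fun a k hk i => ⟨fun _ hpos => ?_, fun j hpos => ?_⟩,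
    fun hD hC a k hk i hti => ⟨fun _ hpos => ?_, fun j hpos => ?_⟩⟩
  · have hle := hsuff.cpu_marginal_le hφ hlam hk hpos
    have hcost := mul_nonneg (N.hw i a k hk).le
      (N.C'_nonneg i (workload_nonneg hφ ht.nonneg i))
    linarith
  · have hle := hsuff.link_marginal_le hφ hlam hk hpos
    have hcost := mul_nonneg (N.hL a k hk).le
      (N.D'_nonneg (hφ.edge_of_pos hpos) (linkFlow_nonneg hφ ht.nonneg i j))
    linarith
  · have hle := hsuff.cpu_marginal_le hφ hlam hk hpos
    have hcost := mul_pos (N.hw i a k hk)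
      (N.C'_pos (hC i) (workload_pos hφ ht.nonneg hk hti hpos))
    linarith
  · have hE := hφ.edge_of_pos hpos
    have hle := hsuff.link_marginal_le hφ hlam hk hpos
    have hcost := mul_pos (N.hL a k hk)
      (N.D'_pos hE (hD i j hE) (linkFlow_pos hφ ht.nonneg hk hti hpos))
    linarith

/-- **Proposition 4 (Monotonicity of marginal costs along used directions).** Under
the sufficient-optimality condition, the marginal cost `λ` is nonincreasing along
every used forwarding direction and across every used computation step; the
monotonicity is strict whenever all cost functions are strictly increasing and the
local traffic is strictly positive. -/
theorem marginal_monotone_along_used_directions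
    (N : SCNet V A) (r : V → A → ℝ) (hr : ∀ i a, 0 ≤ r i a)
    (φ : V → Option V → A → ℕ → ℝ) (t : V → A → ℕ → ℝ) (lam : V → A → ℕ → ℝ)
    (hfeas : Feasible N r φ t) (hlam : IsMarginal N φ t lam)
    (hsuff : SuffCond N φ t lam) :
    (∀ a k, k ≤ N.K a → ∀ i,
      (k < N.K a → 0 < φ i none a k → lam i a (k + 1) ≤ lam i a k)
      ∧ (∀ j, 0 < φ i (some j) a k → lam j a k ≤ lam i a k))
    ∧ ((∀ i j, N.E i j → StrictMonoOn (N.D i j) (Set.Ici 0)) →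
       (∀ i, StrictMonoOn (N.C i) (Set.Ici 0)) →
       ∀ a k, k ≤ N.K a → ∀ i, 0 < t i a k →
        (k < N.K a → 0 < φ i none a k → lam i a (k + 1) < lam i a k)
        ∧ (∀ j, 0 < φ i (some j) a k → lam j a k < lam i a k)) :=
  marginal_monotone_along_used_directions_general N r φ t lam hfeas hlam hsuff
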